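/- arXiv:1903.03190 — 4 statements merged into one kernel-verified Lean document; each statement's English description precedes it below -/
import Mathlib

section
/- Let G be a Young function whose derivative g satisfies p⁻ ≤ t·g(t)/G(t) ≤ p⁺ for all t > 0 with 1 < p⁻ ≤ p⁺. Then for all a > 0 and 0 < t < 1 it holds that (p⁻/p⁺) g(a) t^{p⁺ - 1} ≤ g(at) ≤ (p⁺/p⁻) g(a) t^{p⁻ - 1}. -/
/-!
A lower bound `q G ≤ x g` on `(0, ∞)` makes `G x / x ^ q` nondecreasing there, and an upper bound
`x g ≤ q G` makes it nonincreasing. With `q = p⁻` and `q = p⁺` this gives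
`t ^ p⁺ G a ≤ G (a t) ≤ t ^ p⁻ G a` for `0 < t ≤ 1`, and the growth bounds at `a` and at `a t`
convert these into the two bounds on `g (a t)`.
-/

open Real Set

section RpowScaling

variable {f f' : ℝ → ℝ} {q : ℝ}

theorem monotoneOn_div_rpow_of_mul_le_mul_deriv (hf : ∀ x > 0, HasDerivAt f (f' x) x)
    (hq : ∀ x > 0, q * f x ≤ x * f' x) : MonotoneOn (fun x ↦ f x / x ^ q) (Ioi 0) := by
  have hderiv : ∀ x > 0, HasDerivAt (fun x ↦ f x / x ^ q)
      ((f' x * x ^ q - f x * (q * x ^ (q - 1))) / (x ^ q) ^ 2) x := fun x hx ↦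
    (hf x hx).div (hasDerivAt_rpow_const (.inl hx.ne')) (rpow_pos_of_pos hx q).ne'
  refine monotoneOn_of_hasDerivWithinAt_nonneg (convex_Ioi 0)
    (fun x hx ↦ (hderiv x hx).continuousAt.continuousWithinAt)
    (fun x hx ↦ (hderiv x (interior_subset hx)).hasDerivWithinAt) fun x hx ↦ ?_
  rw [interior_Ioi] at hx
  have hx : 0 < x := hx
  have hxq := rpow_pos_of_pos hx q
  have hnum : f' x * x ^ q - f x * (q * x ^ (q - 1)) = x ^ q / x * (x * f' x - q * f x) := by
    rw [rpow_sub_one hx.ne']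
    field_simp
  rw [hnum]
  have hnonneg : 0 ≤ x * f' x - q * f x := sub_nonneg.mpr (hq x hx)
  positivity

theorem antitoneOn_div_rpow_of_mul_deriv_le_mul (hf : ∀ x > 0, HasDerivAt f (f' x) x)
    (hq : ∀ x > 0, x * f' x ≤ q * f x) : AntitoneOn (fun x ↦ f x / x ^ q) (Ioi 0) := by
  have hmono := monotoneOn_div_rpow_of_mul_le_mul_deriv (f := -f) (fun x hx ↦ (hf x hx).neg)
    fun x hx ↦ by simpa using hq x hx
  intro x hx y hy hxy
  simpa [neg_div] using hmono hx hy hxy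

theorem map_mul_le_rpow_mul_of_monotoneOn (h : MonotoneOn (fun x ↦ f x / x ^ q) (Ioi 0))
    {a t : ℝ} (ha : 0 < a) (ht : 0 < t) (ht1 : t ≤ 1) : f (a * t) ≤ f a * t ^ q := by
  have hle := h (mul_pos ha ht) ha (mul_le_of_le_one_right ha.le ht1)
  simp only [mul_rpow ha.le ht.le] at hle
  rwa [div_le_div_iff₀ (by positivity) (by positivity), mul_comm (a ^ q), ← mul_assoc,
    mul_le_mul_iff_left₀ (rpow_pos_of_pos ha q)] at hle

theorem rpow_mul_le_map_mul_of_antitoneOn (h : AntitoneOn (fun x ↦ f x / x ^ q) (Ioi 0))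
    {a t : ℝ} (ha : 0 < a) (ht : 0 < t) (ht1 : t ≤ 1) : f a * t ^ q ≤ f (a * t) := by
  have hle := h (mul_pos ha ht) ha (mul_le_of_le_one_right ha.le ht1)
  simp only [mul_rpow ha.le ht.le] at hle
  rwa [div_le_div_iff₀ (by positivity) (by positivity), mul_comm (a ^ q), ← mul_assoc,
    mul_le_mul_iff_left₀ (rpow_pos_of_pos ha q)] at hle

end RpowScaling

theorem ConvexOn.nonneg_of_even {G : ℝ → ℝ} (hconv : ConvexOn ℝ univ G)
    (heven : ∀ t, G (-t) = G t) (h0 : G 0 = 0) (s : ℝ) : 0 ≤ G s := by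
  have h := hconv.2 (mem_univ s) (mem_univ (-s)) (by norm_num : (0:ℝ) ≤ 1/2)
    (by norm_num : (0:ℝ) ≤ 1/2) (by norm_num)
  simp only [smul_eq_mul, heven] at h
  rw [show (1/2:ℝ) * s + 1/2 * -s = 0 by ring, h0] at h
  linarith

theorem g_scaling_estimate_general
    (G g : ℝ → ℝ) (pm pp : ℝ)
    (hEven : ∀ t, G (-t) = G t)
    (hConv : ConvexOn ℝ univ G)
    (hG0 : G 0 = 0)
    (hderiv : ∀ t > 0, HasDerivAt G (g t) t)
    (hp : 1 < pm) (hpm : pm ≤ pp)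
    (hgrowth : ∀ t > 0, pm ≤ t * g t / G t ∧ t * g t / G t ≤ pp) :
    ∀ a > 0, ∀ t, 0 < t → t < 1 →
      (pm / pp) * g a * t ^ (pp - 1) ≤ g (a * t) ∧
      g (a * t) ≤ (pp / pm) * g a * t ^ (pm - 1) := by
  intro a ha t ht ht1
  have hpm0 : 0 < pm := one_pos.trans hp
  have hpp0 : 0 < pp := hpm0.trans_le hpm
  have hGpos : ∀ s > 0, 0 < G s := fun s hs ↦
    (hConv.nonneg_of_even hEven hG0 s).lt_of_ne' fun hGs ↦ by
      have := (hgrowth s hs).1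
      rw [hGs, div_zero] at this
      linarith
  have hlow : ∀ s > 0, pm * G s ≤ s * g s := fun s hs ↦
    (le_div_iff₀ (hGpos s hs)).mp (hgrowth s hs).1
  have hhigh : ∀ s > 0, s * g s ≤ pp * G s := fun s hs ↦
    (div_le_iff₀ (hGpos s hs)).mp (hgrowth s hs).2
  have hat : 0 < a * t := mul_pos ha ht
  have hGup := map_mul_le_rpow_mul_of_monotoneOn
    (monotoneOn_div_rpow_of_mul_le_mul_deriv hderiv hlow) ha ht ht1.le
  have hGdown := rpow_mul_le_map_mul_of_antitoneOn
    (antitoneOn_div_rpow_of_mul_deriv_le_mul hderiv hhigh) ha ht ht1.le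
  constructor
  · calc (pm / pp) * g a * t ^ (pp - 1) = pm / pp * (a * g a) * t ^ pp / (a * t) := by
          rw [rpow_sub_one ht.ne']; field_simp
      _ ≤ pm / pp * (pp * G a) * t ^ pp / (a * t) := by
          gcongr pm / pp * ?_ * _ / _; exact hhigh a ha
      _ = pm * (G a * t ^ pp) / (a * t) := by field_simp
      _ ≤ pm * G (a * t) / (a * t) := by gcongr
      _ ≤ g (a * t) := by rw [div_le_iff₀ hat]; linarith [hlow (a * t) hat]
  · calc g (a * t) ≤ pp * G (a * t) / (a * t) := by
          rw [le_div_iff₀ hat]; linarith [hhigh (a * t) hat]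
      _ ≤ pp * (G a * t ^ pm) / (a * t) := by gcongr
      _ ≤ pp * (a * g a / pm * t ^ pm) / (a * t) := by
          gcongr; rw [le_div_iff₀ hpm0]; linarith [hlow a ha]
      _ = (pp / pm) * g a * t ^ (pm - 1) := by rw [rpow_sub_one ht.ne']; field_simp

theorem g_scaling_estimate
    (G g : ℝ → ℝ) (pm pp : ℝ)
    (hEven : ∀ t, G (-t) = G t)
    (hConv : ConvexOn ℝ univ G)
    (hMono : StrictMonoOn G (Ioi 0))
    (hG0 : G 0 = 0)
    (hderiv : ∀ t > 0, HasDerivAt G (g t) t)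
    (hp : 1 < pm) (hpm : pm ≤ pp)
    (hgrowth : ∀ t > 0, pm ≤ t * g t / G t ∧ t * g t / G t ≤ pp) :
    ∀ a > 0, ∀ t, 0 < t → t < 1 →
      (pm / pp) * g a * t ^ (pp - 1) ≤ g (a * t) ∧
      g (a * t) ≤ (pp / pm) * g a * t ^ (pm - 1) :=
  g_scaling_estimate_general G g pm pp hEven hConv hG0 hderiv hp hpm hgrowth
end

section
/- Let G be a Young function with derivative g satisfying p⁻ ≤ t·g(t)/G(t) ≤ p⁺ for all t > 0 with 1 < p⁻ ≤ p⁺. Then the complementary function G* with derivative g* = (G*)' satisfies (p⁺)' ≤ t·g*(t)/G*(t) ≤ (p⁻)' for all t > 0, where (p)' = p/(p−1) denotes the Hölder conjugate exponent. -/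
open Real Set Filter

theorem conjugate_growth_condition
    (G g Gstar gstar : ℝ → ℝ) (pm pp : ℝ)
    (hConv : ConvexOn ℝ (Ici 0) G)
    (hMono : StrictMonoOn G (Ici 0))
    (hG0 : G 0 = 0)
    (hderiv : ∀ t > 0, HasDerivAt G (g t) t)
    (hgMono : StrictMonoOn g (Ioi 0))
    (hp : 1 < pm) (hpm : pm ≤ pp)
    (hgrowth : ∀ t > 0, pm ≤ t * g t / G t ∧ t * g t / G t ≤ pp)
    (hGstar : ∀ a, Gstar a = sSup ((fun t => a * t - G t) '' Ioi 0))
    (hderivstar : ∀ t > 0, HasDerivAt Gstar (gstar t) t) :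
    ∀ t > 0, pp / (pp - 1) ≤ t * gstar t / Gstar t ∧
      t * gstar t / Gstar t ≤ pm / (pm - 1) := by
  have hGpos : ∀ t, 0 < t → 0 < G t := by
    intro t ht
    have := hMono self_mem_Ici (le_of_lt ht) ht
    rwa [hG0] at this
  have hgrow1 : ∀ t, 0 < t → pm * G t ≤ t * g t := by
    intro t ht
    exact (le_div_iff₀ (hGpos t ht)).mp (hgrowth t ht).1
  have hgrow2 : ∀ t, 0 < t → t * g t ≤ pp * G t := by
    intro t ht
    exact (div_le_iff₀ (hGpos t ht)).mp (hgrowth t ht).2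
  have hgpos : ∀ t, 0 < t → 0 < g t := by
    intro t ht
    have h1 := hgrow1 t ht
    have h2 : 0 < pm * G t := mul_pos (by linarith) (hGpos t ht)
    nlinarith
  -- tangent line inequality
  have htan : ∀ t, 0 < t → ∀ u, 0 < u → G t + g t * (u - t) ≤ G u := by
    intro t ht u hu
    rcases lt_trichotomy u t with h | h | h
    · have hcont : ContinuousOn G (Icc u t) := fun x hx =>
        ((hderiv x (lt_of_lt_of_le hu hx.1)).continuousAt).continuousWithinAt
      obtain ⟨c, hc, hceq⟩ := exists_hasDerivAt_eq_slope G g h hcont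
        (fun x hx => hderiv x (hu.trans hx.1))
      have hgc : g c < g t := hgMono (show c ∈ Ioi 0 from hu.trans hc.1) ht hc.2
      rw [eq_div_iff (by linarith : t - u ≠ 0)] at hceq
      nlinarith
    · subst h; simp
    · have hcont : ContinuousOn G (Icc t u) := fun x hx =>
        ((hderiv x (lt_of_lt_of_le ht hx.1)).continuousAt).continuousWithinAt
      obtain ⟨c, hc, hceq⟩ := exists_hasDerivAt_eq_slope G g h hcont
        (fun x hx => hderiv x (ht.trans hx.1))
      have hgc : g t < g c := hgMono ht (show c ∈ Ioi 0 from ht.trans hc.1) hc.1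
      rw [eq_div_iff (by linarith : u - t ≠ 0)] at hceq
      nlinarith
  have hIsG : ∀ t, 0 < t →
      IsGreatest ((fun u => g t * u - G u) '' Ioi 0) (g t * t - G t) := by
    intro t ht
    constructor
    · exact ⟨t, ht, rfl⟩
    · rintro y ⟨u, hu, rfl⟩
      have := htan t ht u hu
      dsimp only
      nlinarith
  have hYoung : ∀ t, 0 < t → Gstar (g t) = g t * t - G t := by
    intro t ht
    rw [hGstar]
    exact (hIsG t ht).csSup_eq
  -- monotonicity of G t / t ^ pm
  have hF : ∀ x y, 0 < x → x ≤ y → G x / x ^ pm ≤ G y / y ^ pm := by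
    intro x y hx hxy
    rcases eq_or_lt_of_le hxy with rfl | hlt
    · exact le_refl _
    have hcont : ContinuousOn (fun u => G u / u ^ pm) (Icc x y) := by
      intro u hu
      have hu0 : 0 < u := lt_of_lt_of_le hx hu.1
      exact (((hderiv u hu0).continuousAt).div
        ((continuousAt_rpow_const u pm (Or.inl hu0.ne')))
        ((Real.rpow_pos_of_pos hu0 pm).ne')).continuousWithinAt
    obtain ⟨c, hc, hceq⟩ := exists_hasDerivAt_eq_slope (fun u => G u / u ^ pm)
      (fun c => (g c * c ^ pm - G c * (pm * c ^ (pm - 1))) / (c ^ pm) ^ 2) hlt hcont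
      (fun c hc => by
        have hc0 : 0 < c := hx.trans hc.1
        exact (hderiv c hc0).div (Real.hasDerivAt_rpow_const (Or.inl hc0.ne'))
          (Real.rpow_pos_of_pos hc0 pm).ne')
    have hc0 : 0 < c := hx.trans hc.1
    have h1 : c ^ pm = c ^ (pm - 1) * c := by
      rw [← Real.rpow_add_one hc0.ne' (pm - 1)]; ring_nf
    have h2 := hgrow1 c hc0
    have hpow : 0 < c ^ (pm - 1) := Real.rpow_pos_of_pos hc0 _
    have hnum : 0 ≤ g c * c ^ pm - G c * (pm * c ^ (pm - 1)) := by
      rw [h1]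
      nlinarith [mul_le_mul_of_nonneg_right h2 hpow.le]
    have hden : 0 < ((c : ℝ) ^ pm) ^ 2 := by positivity
    have hslope : 0 ≤ (G y / y ^ pm - G x / x ^ pm) / (y - x) := by
      rw [← hceq]; exact div_nonneg hnum hden.le
    have hyx : 0 < y - x := by linarith
    rw [le_div_iff₀ hyx] at hslope
    linarith
  have hG1 : 0 < G 1 := hGpos 1 one_pos
  have hGsmall : ∀ t, 0 < t → t ≤ 1 → G t ≤ G 1 * t ^ pm := by
    intro t ht h1
    have := hF t 1 ht h1
    rw [Real.one_rpow, div_one] at this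
    have hp0 : 0 < t ^ pm := Real.rpow_pos_of_pos ht pm
    rw [div_le_iff₀ hp0] at this
    linarith
  have hGbig : ∀ t, 1 ≤ t → G 1 * t ^ pm ≤ G t := by
    intro t h1
    have := hF 1 t one_pos h1
    rw [Real.one_rpow, div_one] at this
    have hp0 : 0 < t ^ pm := Real.rpow_pos_of_pos (lt_of_lt_of_le one_pos h1) pm
    rw [le_div_iff₀ hp0] at this
    linarith
  -- surjectivity of g onto (0, ∞)
  have hsurj : ∀ a, 0 < a → ∃ t, 0 < t ∧ g t = a := by
    intro a ha
    have hpp : 0 < pp := by linarith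
    have htend0 : Tendsto (fun t : ℝ => pp * G 1 * t ^ (pm - 1)) (nhdsWithin 0 (Ioi 0))
        (nhds 0) := by
      have hc : ContinuousAt (fun t : ℝ => t ^ (pm - 1)) 0 :=
        continuousAt_rpow_const 0 (pm - 1) (Or.inr (by linarith))
      have h : Tendsto (fun t : ℝ => t ^ (pm - 1)) (nhdsWithin 0 (Ioi 0))
          (nhds ((0:ℝ) ^ (pm - 1))) := (hc.tendsto).mono_left nhdsWithin_le_nhds
      have h2 := h.const_mul (pp * G 1)
      simpa [Real.zero_rpow (show pm - 1 ≠ 0 by intro h'; linarith)] using h2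
    have hev : ∀ᶠ t in nhdsWithin (0:ℝ) (Ioi 0), pp * G 1 * t ^ (pm - 1) < a :=
      htend0.eventually (Filter.Tendsto.eventually_lt_const ha tendsto_id) |>.mono (fun _ h => h)
    have hev2 : ∀ᶠ t in nhdsWithin (0:ℝ) (Ioi 0), t ∈ Ioo (0:ℝ) 1 :=
      eventually_of_mem (Ioo_mem_nhdsGT_of_mem (by constructor <;> norm_num)) fun x hx => hx
    obtain ⟨t1, h1, h2⟩ := (hev.and hev2).exists
    have ht1 : 0 < t1 := h2.1
    have he3 : t1 ^ pm = t1 ^ (pm - 1) * t1 := by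
      rw [← Real.rpow_add_one ht1.ne' (pm - 1)]; ring_nf
    have hg1 : g t1 < a := by
      have e1 := hgrow2 t1 ht1
      have e2 := hGsmall t1 ht1 h2.2.le
      rw [he3] at e2
      have key : t1 * g t1 < a * t1 := by
        linarith [mul_lt_mul_of_pos_right h1 ht1, mul_le_mul_of_nonneg_left e2 hpp.le]
      exact lt_of_mul_lt_mul_left (by linarith [key] : t1 * g t1 < t1 * a) ht1.le
    have htendT : Tendsto (fun t : ℝ => pm * G 1 * t ^ (pm - 1)) atTop atTop :=
      (tendsto_rpow_atTop (by linarith : (0:ℝ) < pm - 1)).const_mul_atTop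
        (by positivity : (0:ℝ) < pm * G 1)
    obtain ⟨t2, h3, h4⟩ := ((htendT.eventually_gt_atTop a).and (eventually_ge_atTop 1)).exists
    have ht2 : 0 < t2 := lt_of_lt_of_le one_pos h4
    have he4 : t2 ^ pm = t2 ^ (pm - 1) * t2 := by
      rw [← Real.rpow_add_one ht2.ne' (pm - 1)]; ring_nf
    have hg2 : a < g t2 := by
      have e1 := hgrow1 t2 ht2
      have e2 := hGbig t2 h4
      rw [he4] at e2
      have key : a * t2 < t2 * g t2 := by
        linarith [mul_lt_mul_of_pos_right h3 ht2,
          mul_le_mul_of_nonneg_left e2 (by linarith : (0:ℝ) ≤ pm)]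
      exact lt_of_mul_lt_mul_left (by linarith [key] : t2 * a < t2 * g t2) ht2.le
    have ht12 : t1 ≤ t2 := le_of_lt (lt_of_lt_of_le h2.2 h4)
    obtain ⟨c, hc, hceq⟩ := exists_hasDerivWithinAt_eq_of_gt_of_lt ht12
      (fun x hx => (hderiv x (lt_of_lt_of_le ht1 hx.1)).hasDerivWithinAt) hg1 hg2
    exact ⟨c, ht1.trans hc.1, hceq⟩
  -- gstar (g t) = t
  have hgstar_eq : ∀ t, 0 < t → gstar (g t) = t := by
    intro t ht
    have ha : 0 < g t := hgpos t ht
    have hmin : IsLocalMin (fun b => Gstar b - b * t) (g t) := by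
      filter_upwards [Ioi_mem_nhds ha] with b hb
      obtain ⟨u, hu, hub⟩ := hsurj b hb
      have h1 := hYoung u hu
      have h2 : g u * t - G t ≤ g u * u - G u := (hIsG u hu).2 ⟨t, ht, rfl⟩
      show Gstar (g t) - g t * t ≤ Gstar b - b * t
      rw [hYoung t ht, ← hub, h1]
      linarith
    have hd : HasDerivAt (fun b => Gstar b - b * t) (gstar (g t) - t) (g t) :=
      (hderivstar (g t) ha).sub (hasDerivAt_mul_const t)
    have := hmin.hasDerivAt_eq_zero hd
    linarith
  -- conclusion
  intro s hs
  obtain ⟨t, ht, rfl⟩ := hsurj s hs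
  have hA := hGpos t ht
  have hB1 := hgrow1 t ht
  have hB2 := hgrow2 t ht
  rw [hYoung t ht, hgstar_eq t ht]
  have hd : 0 < g t * t - G t := by nlinarith
  have hpp1 : 0 < pp - 1 := by linarith
  have hpm1 : 0 < pm - 1 := by linarith
  constructor
  · rw [div_le_div_iff₀ hpp1 hd]; nlinarith
  · rw [div_le_div_iff₀ hd hpm1]; nlinarith
end

section
/- Let G : [0,∞) → [0,∞) be strictly increasing and convex, M : (0,∞) → (0,∞), H a closed half-space with reflection x ↦ x̃, u : ℝⁿ → ℝ with polarization u_H. Then for all x, y ∈ H: G(|u_H(x̃) − u_H(ỹ)| / M(|x − y|)) + G(|u_H(x) − u_H(y)| / M(|x − y|)) ≤ G(|u(x) − u(y)| / M(|x − y|)) + G(|u(x̃) − u(ỹ)| / M(|x − y|)). -/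
/-!
For `x, y ∈ H` the polarization replaces the pairs `(u x, u x̃)` and `(u y, u ỹ)` by their `max`
at the point of `H` and their `min` at its reflection (a point of `H` whose reflection also lies
in `H` is on `∂H`, hence fixed). The increments of `min` and of `max` are dominated by the old
increments `|u x - u y|`, `|u x̃ - u ỹ|` both in maximum and in sum, and for a convex nondecreasing
function on `[0, ∞)` such a weak majorization of pairs gives `G p + G q ≤ G r + G s`.
-/

open Real Set Classical

theorem abs_min_sub_min_add_abs_max_sub_max_le {α : Type*} [AddCommGroup α] [LinearOrder α]
    [IsOrderedAddMonoid α] (a b c d : α) :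
    |min a b - min c d| + |max a b - max c d| ≤ |a - c| + |b - d| := by
  -- equality when `a, b` and `c, d` are ordered alike; otherwise the sorted matching is cheaper
  rcases le_total a b with hab | hab <;> rcases le_total c d with hcd | hcd <;>
    simp only [hab, hcd, min_eq_left, min_eq_right, max_eq_left, max_eq_right] <;>
    grind [abs_cases]

section Convex

variable {𝕜 : Type*} [Field 𝕜] [LinearOrder 𝕜] [IsStrictOrderedRing 𝕜] {s : Set 𝕜} {f : 𝕜 → 𝕜}

theorem ConvexOn.add_le_add_of_add_eq (hf : ConvexOn 𝕜 s f) {a b x y : 𝕜} (ha : a ∈ s)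
    (hb : b ∈ s) (hax : a ≤ x) (hxb : x ≤ b) (hsum : x + y = a + b) :
    f x + f y ≤ f a + f b := by
  rcases hax.eq_or_lt with rfl | hax
  · rw [add_left_cancel hsum]
  have hab : 0 < b - a := by linarith
  set t := (b - x) / (b - a)
  have ht₀ : 0 ≤ t := div_nonneg (by linarith) hab.le
  have ht₁ : 0 ≤ 1 - t := by rw [sub_nonneg, div_le_one hab]; linarith
  have hx : t • a + (1 - t) • b = x := by simp only [t, smul_eq_mul]; field_simp; ring
  have hy : (1 - t) • a + t • b = y := by
    simp only [smul_eq_mul] at hx ⊢; linear_combination -hsum - hx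
  have h₁ := hf.2 ha hb ht₀ ht₁ (by ring)
  have h₂ := hf.2 ha hb ht₁ ht₀ (by ring)
  rw [hx] at h₁
  rw [hy] at h₂
  simp only [smul_eq_mul] at h₁ h₂
  linarith

theorem ConvexOn.add_le_add_of_le_of_add_le (hf : ConvexOn 𝕜 s f) (hf' : MonotoneOn f s)
    {x₁ x₂ y₁ y₂ : 𝕜} (hx₁ : x₁ ∈ s) (hy₁ : y₁ ∈ s) (hy₂ : y₂ ∈ s) (hx : x₁ ≤ x₂)
    (hx₂y₂ : x₂ ≤ y₂) (hsum : x₁ + x₂ ≤ y₁ + y₂) :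
    f x₁ + f x₂ ≤ f y₁ + f y₂ := by
  have hx₂ : x₂ ∈ s := hf.1.ordConnected.out hx₁ hy₂ ⟨hx, hx₂y₂⟩
  rcases le_total x₁ y₁ with h | h
  · exact add_le_add (hf' hx₁ hy₁ h) (hf' hx₂ hy₂ hx₂y₂)
  -- raise `x₂` to `y₁ + y₂ - x₁`, so that the sum is preserved
  have hz : y₁ + y₂ - x₁ ∈ s := hf.1.ordConnected.out hx₂ hy₂ ⟨by linarith, by linarith⟩
  calc f x₁ + f x₂ ≤ f x₁ + f (y₁ + y₂ - x₁) := by gcongr; exact hf' hx₂ hz (by linarith)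
    _ ≤ f y₁ + f y₂ := hf.add_le_add_of_add_eq hy₁ hy₂ h (by linarith) (by ring)

theorem ConvexOn.add_le_add_of_max_le_of_add_le (hf : ConvexOn 𝕜 s f) (hf' : MonotoneOn f s)
    {x₁ x₂ y₁ y₂ : 𝕜} (hx₁ : x₁ ∈ s) (hx₂ : x₂ ∈ s) (hy₁ : y₁ ∈ s) (hy₂ : y₂ ∈ s)
    (hmax : max x₁ x₂ ≤ max y₁ y₂) (hsum : x₁ + x₂ ≤ y₁ + y₂) :
    f x₁ + f x₂ ≤ f y₁ + f y₂ := by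
  have sort : ∀ a b : 𝕜, f a + f b = f (min a b) + f (max a b) := by
    intro a b; rcases le_total a b with h | h <;> simp [h, add_comm]
  rw [sort x₁, sort y₁]
  rw [← min_add_max x₁, ← min_add_max y₁] at hsum
  exact hf.add_le_add_of_le_of_add_le hf' (min_rec' s hx₁ hx₂) (min_rec' s hy₁ hy₂)
    (max_rec' s hy₁ hy₂) min_le_max hmax hsum

end Convex

theorem ConvexOn.map_abs_min_sub_min_div_add_map_abs_max_sub_max_div_le {f : ℝ → ℝ}
    (hf : ConvexOn ℝ (Ici 0) f) (hf' : MonotoneOn f (Ici 0)) {m : ℝ} (hm : 0 ≤ m) (a b c d : ℝ) :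
    f (|min a b - min c d| / m) + f (|max a b - max c d| / m) ≤
      f (|a - c| / m) + f (|b - d| / m) := by
  have mem : ∀ t : ℝ, |t| / m ∈ Ici 0 := fun t ↦ div_nonneg (abs_nonneg t) hm
  refine hf.add_le_add_of_max_le_of_add_le hf' (mem _) (mem _) (mem _) (mem _) ?_ ?_
  · rw [max_div_div_right hm, max_div_div_right hm]
    exact div_le_div_of_nonneg_right
      (max_le (abs_min_sub_min_le_max a b c d) (abs_max_sub_max_le_max a b c d)) hm
  · rw [← add_div, ← add_div]
    exact div_le_div_of_nonneg_right (abs_min_sub_min_add_abs_max_sub_max_le a b c d) hm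

section Polarization

variable {α β : Type*} [LinearOrder β] {H : Set α} {σ : α → α}

noncomputable def polarization (H : Set α) (σ : α → α) (u : α → β) (x : α) : β :=
  if x ∈ H then max (u x) (u (σ x)) else min (u x) (u (σ x))

theorem polarization_of_mem (u : α → β) {x : α} (hx : x ∈ H) :
    polarization H σ u x = max (u x) (u (σ x)) :=
  if_pos hx

theorem polarization_reflect_of_mem (hσ : Function.Involutive σ)
    (hfix : ∀ x ∈ H, σ x ∈ H → σ x = x) (u : α → β) {x : α} (hx : x ∈ H) :
    polarization H σ u (σ x) = min (u x) (u (σ x)) := by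
  by_cases hσx : σ x ∈ H
  · simp [polarization, hfix x hx hσx, hx]
  · rw [polarization, if_neg hσx, hσ x, min_comm]

end Polarization

section Reflection

variable {E : Type*} [NormedAddCommGroup E] [InnerProductSpace ℝ E] {ν : E}

def halfSpaceReflection (ν : E) (c : ℝ) (x : E) : E :=
  x - (2 * ((inner ℝ x ν : ℝ) - c)) • ν

theorem inner_halfSpaceReflection (hν : ‖ν‖ = 1) (c : ℝ) (x : E) :
    inner ℝ (halfSpaceReflection ν c x) ν = 2 * c - inner ℝ x ν := by
  rw [halfSpaceReflection, inner_sub_left, real_inner_smul_left, real_inner_self_eq_norm_sq, hν]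
  ring

theorem halfSpaceReflection_involutive (hν : ‖ν‖ = 1) (c : ℝ) :
    Function.Involutive (halfSpaceReflection ν c) := by
  intro x
  rw [halfSpaceReflection, inner_halfSpaceReflection hν, halfSpaceReflection]
  module

theorem halfSpaceReflection_eq_self_of_le_inner (hν : ‖ν‖ = 1) {c : ℝ} {x : E}
    (hx : c ≤ inner ℝ x ν) (hσx : c ≤ inner ℝ (halfSpaceReflection ν c x) ν) :
    halfSpaceReflection ν c x = x := by
  rw [inner_halfSpaceReflection hν] at hσx
  have hxc : inner ℝ x ν = c := by linarith
  simp [halfSpaceReflection, hxc]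

end Reflection

theorem polarization_same_side_inequality
    (n : ℕ) (ν : EuclideanSpace ℝ (Fin n)) (c : ℝ)
    (hν : ‖ν‖ = 1)
    (H : Set (EuclideanSpace ℝ (Fin n)))
    (hH : H = {x | c ≤ inner ℝ x ν})
    (σ : EuclideanSpace ℝ (Fin n) → EuclideanSpace ℝ (Fin n))
    (hσ : ∀ x, σ x = x - (2 * ((inner ℝ x ν : ℝ) - c)) • ν)
    (G : ℝ → ℝ) (hGmono : StrictMonoOn G (Ici 0)) (hGconv : ConvexOn ℝ (Ici 0) G)
    (M : ℝ → ℝ) (hM : ∀ r > 0, 0 < M r)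
    (u uH : EuclideanSpace ℝ (Fin n) → ℝ)
    (huH : ∀ x, uH x = if x ∈ H then max (u x) (u (σ x)) else min (u x) (u (σ x))) :
    ∀ x ∈ H, ∀ y ∈ H,
      G (|uH (σ x) - uH (σ y)| / M ‖x - y‖) + G (|uH x - uH y| / M ‖x - y‖) ≤
      G (|u x - u y| / M ‖x - y‖) + G (|u (σ x) - u (σ y)| / M ‖x - y‖) := by
  obtain rfl : σ = halfSpaceReflection ν c := funext hσ
  obtain rfl : uH = polarization H (halfSpaceReflection ν c) u := funext huH
  subst hH
  have hfix : ∀ x ∈ {x | c ≤ inner ℝ x ν}, halfSpaceReflection ν c x ∈ {x | c ≤ inner ℝ x ν} →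
      halfSpaceReflection ν c x = x :=
    fun x hx hσx ↦ halfSpaceReflection_eq_self_of_le_inner hν hx hσx
  have hinv := halfSpaceReflection_involutive hν c
  intro x hx y hy
  rw [polarization_of_mem u hx, polarization_of_mem u hy, polarization_reflect_of_mem hinv hfix u hx,
    polarization_reflect_of_mem hinv hfix u hy]
  rcases eq_or_ne x y with rfl | hxy
  · simp -- `M 0` may have any sign, but then both sides are `2 * G (0 / M 0)`
  · exact hGconv.map_abs_min_sub_min_div_add_map_abs_max_sub_max_div_le hGmono.monotoneOn
      (hM _ (norm_pos_iff.2 (sub_ne_zero.2 hxy))).le _ _ _ _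
end

section
/- Suppose M, N nondecreasing satisfy M(r) ≥ min{1,r} and ∫₀¹ r^{p⁻}/(M(r)^{p⁻} N(r)) r^{n−1} dr < ∞. Let η_k(x) = η(x/k) with η smooth, 0 ≤ η ≤ 1, η = 1 on B₁, supp η = B₂, |∇η| ≤ 2. Then there is C independent of u and k such that for every u ∈ W^{M,N,G}(ℝⁿ), Φ_{M,N,G}(η_k u) ≤ C (Φ_{M,N,G}(u) + Φ_G(u)). -/
set_option maxHeartbeats 2000000

open Real Set MeasureTheory ENNReal Metric
open scoped ENNReal

open Set MeasureTheory Metric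
open scoped ENNReal

lemma my_lintegral_fun_norm_addHaar {E : Type*} [NormedAddCommGroup E] [NormedSpace ℝ E]
    [MeasurableSpace E] [BorelSpace E] [FiniteDimensional ℝ E] [Nontrivial E]
    (μ : Measure E) [Measure.IsAddHaarMeasure μ] (f : ℝ → ℝ≥0∞) (hf : Measurable f) :
    ∫⁻ x, f ‖x‖ ∂μ = μ.toSphere univ *
      ∫⁻ y in Ioi (0:ℝ), ENNReal.ofReal (y ^ (Module.finrank ℝ E - 1)) * f y := by
  have h1 : ∫⁻ x, f ‖x‖ ∂μ = ∫⁻ x : ({(0:E)}ᶜ : Set E), f ‖(x : E)‖ ∂(μ.comap (↑)) := by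
    rw [lintegral_subtype_comap (measurableSet_singleton (0:E)).compl (fun x => f ‖x‖),
      MeasureTheory.restrict_compl_singleton]
  have h2 : ∫⁻ x : ({(0:E)}ᶜ : Set E), f ‖(x : E)‖ ∂(μ.comap (↑)) =
      ∫⁻ p : sphere (0:E) 1 × Ioi (0:ℝ), f p.2
        ∂(μ.toSphere.prod (.volumeIoiPow (Module.finrank ℝ E - 1))) := by
    rw [← μ.measurePreserving_homeomorphUnitSphereProd.lintegral_comp
      (f := fun p : sphere (0:E) 1 × Ioi (0:ℝ) => f p.2)
      (hf.comp (measurable_subtype_coe.comp measurable_snd))]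
    simp only [homeomorphUnitSphereProd_apply_snd_coe]
  have h3 : ∫⁻ p : sphere (0:E) 1 × Ioi (0:ℝ), f p.2
        ∂(μ.toSphere.prod (.volumeIoiPow (Module.finrank ℝ E - 1))) =
      μ.toSphere univ * ∫⁻ y : Ioi (0:ℝ), f y ∂(Measure.volumeIoiPow (Module.finrank ℝ E - 1)) := by
    rw [MeasureTheory.lintegral_prod (fun p : sphere (0:E) 1 × Ioi (0:ℝ) => f p.2)
      ((hf.comp (measurable_subtype_coe.comp measurable_snd)).aemeasurable)]
    simp [lintegral_const, mul_comm]
  have h4 : ∫⁻ y : Ioi (0:ℝ), f y ∂(Measure.volumeIoiPow (Module.finrank ℝ E - 1)) =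
      ∫⁻ y in Ioi (0:ℝ), ENNReal.ofReal (y ^ (Module.finrank ℝ E - 1)) * f y := by
    rw [Measure.volumeIoiPow, lintegral_withDensity_eq_lintegral_mul _
      ((measurable_subtype_coe.pow_const _).ennreal_ofReal)
      (show Measurable fun y : Ioi (0:ℝ) => f ↑y from hf.comp measurable_subtype_coe),
      ← lintegral_subtype_comap measurableSet_Ioi
        (fun y : ℝ => ENNReal.ofReal (y ^ (Module.finrank ℝ E - 1)) * f y)]
    rfl
  rw [h1, h2, h3, h4]

open Real Set

section Gaux
variable {G g : ℝ → ℝ} {pm pp : ℝ}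
  (hEven : ∀ t, G (-t) = G t)
  (hConv : ConvexOn ℝ univ G)
  (hG0 : G 0 = 0)
  (hderiv : ∀ t > 0, HasDerivAt G (g t) t)
  (hp : 1 < pm) (hpm : pm ≤ pp)
  (hgrowth : ∀ t > 0, pm ≤ t * g t / G t ∧ t * g t / G t ≤ pp)

include hEven hConv hG0 in
lemma G_nonneg : ∀ t, 0 ≤ G t := by
  intro t
  have h := hConv.2 (mem_univ t) (mem_univ (-t)) (by norm_num : (0:ℝ) ≤ 1/2)
    (by norm_num : (0:ℝ) ≤ 1/2) (by norm_num)
  simp only [smul_eq_mul, hEven t] at h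
  have : (1/2 : ℝ) * t + 1/2 * -t = 0 := by ring
  rw [this, hG0] at h
  linarith

include hEven hConv hG0 hp hgrowth in
lemma G_pos : ∀ t, 0 < t → 0 < G t := by
  intro t ht
  rcases (G_nonneg hEven hConv hG0 t).lt_or_eq with h | h
  · exact h
  · exfalso
    have := (hgrowth t ht).1
    rw [← h, _root_.div_zero] at this
    linarith

include hEven hConv hG0 in
lemma G_mono : ∀ a b : ℝ, 0 ≤ a → a ≤ b → G a ≤ G b := by
  intro x y hx hxy
  rcases hx.lt_or_eq with hx' | hx'
  · rcases hxy.lt_or_eq with h | h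
    · have hy : (0:ℝ) < y := hx'.trans h
      have hdiv1 : x / y ≤ 1 := by rw [div_le_one hy]; exact hxy
      have h2 := hConv.2 (mem_univ (0:ℝ)) (mem_univ y)
        (sub_nonneg.2 hdiv1 : (0:ℝ) ≤ 1 - x/y)
        (by positivity : (0:ℝ) ≤ x/y) (by ring)
      simp only [smul_eq_mul, mul_zero, zero_add, hG0, mul_zero, zero_add] at h2
      rw [div_mul_cancel₀ x hy.ne'] at h2
      calc G x ≤ x/y * G y := h2
        _ ≤ 1 * G y := mul_le_mul_of_nonneg_right hdiv1 (G_nonneg hEven hConv hG0 y)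
        _ = G y := one_mul _
    · rw [h]
  · rw [← hx', hG0]; exact G_nonneg hEven hConv hG0 y

include hEven hConv hG0 hderiv hp hgrowth in
lemma G_scale_up (hppos : 0 < pp) : ∀ c t : ℝ, 1 ≤ c → 0 ≤ t → G (c * t) ≤ c ^ pp * G t := by
  have hGpos := G_pos hEven hConv hG0 hp hgrowth
  have hA : AntitoneOn (fun x => G x / x ^ pp) (Ioi (0:ℝ)) := by
    have hd : ∀ x ∈ Ioi (0:ℝ), HasDerivAt (fun x => G x / x ^ pp)
        ((g x * x ^ pp - G x * (pp * x ^ (pp - 1))) / (x ^ pp) ^ 2) x := by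
      intro x hx
      have hx' : (0:ℝ) < x := hx
      exact (hderiv x hx').div (Real.hasDerivAt_rpow_const (Or.inl (ne_of_gt hx')))
        (by positivity)
    refine antitoneOn_of_deriv_nonpos (convex_Ioi 0)
      (fun x hx => (hd x hx).continuousAt.continuousWithinAt)
      (fun x hx => by
        rw [interior_Ioi] at hx; exact (hd x hx).differentiableAt.differentiableWithinAt)
      (fun x hx => ?_)
    rw [interior_Ioi] at hx
    have hx' : (0:ℝ) < x := hx
    rw [(hd x hx).deriv]
    apply div_nonpos_of_nonpos_of_nonneg _ (by positivity)
    rw [sub_nonpos]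
    have h1 : x * g x ≤ pp * G x := by
      have := (hgrowth x hx').2
      rw [div_le_iff₀ (hGpos x hx')] at this
      linarith [this]
    have hxpow : x ^ pp = x * x ^ (pp - 1) := by
      nth_rewrite 1 [show pp = 1 + (pp - 1) by ring]
      rw [Real.rpow_add hx', Real.rpow_one]
    calc g x * x ^ pp = (x * g x) * x ^ (pp - 1) := by rw [hxpow]; ring
      _ ≤ (pp * G x) * x ^ (pp - 1) := by
          apply mul_le_mul_of_nonneg_right h1 (by positivity)
      _ = G x * (pp * x ^ (pp - 1)) := by ring
  intro c t hc ht
  rcases ht.lt_or_eq with ht' | ht'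
  · have hct : (0:ℝ) < c * t := by positivity
    have hle : t ≤ c * t := le_mul_of_one_le_left ht hc
    have h := hA (mem_Ioi.2 ht') (mem_Ioi.2 hct) hle
    simp only at h
    rw [div_le_div_iff₀ (by positivity) (by positivity)] at h
    rw [Real.mul_rpow (by linarith) ht] at h
    have htp : (0:ℝ) < t ^ pp := Real.rpow_pos_of_pos ht' pp
    nlinarith [htp, h]
  · rw [← ht', mul_zero, hG0, mul_zero]

include hEven hConv hG0 hderiv hp hgrowth in
lemma G_scale_down (hpmpos : 0 < pm) : ∀ s t : ℝ, 0 ≤ s → s ≤ 1 → 0 ≤ t →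
    G (s * t) ≤ s ^ pm * G t := by
  have hGpos := G_pos hEven hConv hG0 hp hgrowth
  have hA : MonotoneOn (fun x => G x / x ^ pm) (Ioi (0:ℝ)) := by
    have hd : ∀ x ∈ Ioi (0:ℝ), HasDerivAt (fun x => G x / x ^ pm)
        ((g x * x ^ pm - G x * (pm * x ^ (pm - 1))) / (x ^ pm) ^ 2) x := by
      intro x hx
      have hx' : (0:ℝ) < x := hx
      exact (hderiv x hx').div (Real.hasDerivAt_rpow_const (Or.inl (ne_of_gt hx')))
        (by positivity)
    refine monotoneOn_of_deriv_nonneg (convex_Ioi 0)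
      (fun x hx => (hd x hx).continuousAt.continuousWithinAt)
      (fun x hx => by
        rw [interior_Ioi] at hx; exact (hd x hx).differentiableAt.differentiableWithinAt)
      (fun x hx => ?_)
    rw [interior_Ioi] at hx
    have hx' : (0:ℝ) < x := hx
    rw [(hd x hx).deriv]
    apply div_nonneg _ (by positivity)
    rw [sub_nonneg]
    have h1 : pm * G x ≤ x * g x := by
      have := (hgrowth x hx').1
      rw [le_div_iff₀ (hGpos x hx')] at this
      linarith [this]
    have hxpow : x ^ pm = x * x ^ (pm - 1) := by
      nth_rewrite 1 [show pm = 1 + (pm - 1) by ring]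
      rw [Real.rpow_add hx', Real.rpow_one]
    calc G x * (pm * x ^ (pm - 1)) = (pm * G x) * x ^ (pm - 1) := by ring
      _ ≤ (x * g x) * x ^ (pm - 1) := by
          apply mul_le_mul_of_nonneg_right h1 (by positivity)
      _ = g x * x ^ pm := by rw [hxpow]; ring
  intro s t hs hs1 ht
  rcases hs.lt_or_eq with hs' | hs'
  · rcases ht.lt_or_eq with ht' | ht'
    · have hst : (0:ℝ) < s * t := by positivity
      have hle : s * t ≤ t := by nlinarith
      have h := hA (mem_Ioi.2 hst) (mem_Ioi.2 ht') hle
      simp only at h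
      rw [div_le_div_iff₀ (by positivity) (by positivity)] at h
      rw [Real.mul_rpow hs ht] at h
      have htp : (0:ℝ) < t ^ pm := Real.rpow_pos_of_pos ht' pm
      nlinarith [htp, h]
    · rw [← ht', mul_zero, hG0, mul_zero]
  · rw [← hs', zero_mul, hG0, Real.zero_rpow (ne_of_gt hpmpos), zero_mul]

end Gaux

open Real Set MeasureTheory ENNReal Metric
open scoped ENNReal

lemma monotone_ext (M : ℝ → ℝ) (h : MonotoneOn M (Ioi 0)) (hpos : ∀ r > 0, 0 < M r) :
    ∃ M' : ℝ → ℝ, Monotone M' ∧ ∀ r, 0 < r → M' r = M r := by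
  classical
  refine ⟨fun r => if 0 < r then M r else sInf (M '' Ioi 0), ?_, fun r hr => if_pos hr⟩
  have hbdd : BddBelow (M '' Ioi 0) := by
    refine ⟨0, fun x hx => ?_⟩
    obtain ⟨r, hr, rfl⟩ := hx
    exact (hpos r hr).le
  intro a b hab
  dsimp only
  split_ifs with ha hb hb
  · exact h ha (ha.trans_le hab) hab
  · exact absurd (ha.trans_le hab) hb
  · exact csInf_le hbdd ⟨b, hb, rfl⟩
  · exact le_refl _

lemma eta_lip {E : Type*} [NormedAddCommGroup E] [NormedSpace ℝ E] (η : E → ℝ)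
    (hd : Differentiable ℝ η) (hgrad : ∀ x, ‖fderiv ℝ η x‖ ≤ 2)
    (h01 : ∀ x, 0 ≤ η x ∧ η x ≤ 1) (c : ℝ) (hc0 : 0 ≤ c) (hc1 : c ≤ 1) (x y : E) :
    |η (c • x) - η (c • y)| ≤ min (2 * ‖x - y‖) 1 := by
  refine le_min ?_ ?_
  · set f' : E → (E →L[ℝ] ℝ) := fun z =>
      (fderiv ℝ η (c • z)).comp (c • ContinuousLinearMap.id ℝ E) with hf'
    have hf : ∀ z : E, HasFDerivAt (fun w => η (c • w)) (f' z) z := by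
      intro z
      have h1 : HasFDerivAt (fun w : E => c • w) (c • ContinuousLinearMap.id ℝ E) z :=
        (hasFDerivAt_id z).const_smul c
      exact ((hd (c • z)).hasFDerivAt).comp z h1
    have hb : ∀ z : E, ‖f' z‖ ≤ 2 := by
      intro z
      calc ‖f' z‖ ≤ ‖fderiv ℝ η (c • z)‖ * ‖c • ContinuousLinearMap.id ℝ E‖ :=
            ContinuousLinearMap.opNorm_comp_le _ _
        _ ≤ 2 * 1 := by
            apply mul_le_mul (hgrad _) ?_ (norm_nonneg _) (by norm_num)
            calc ‖c • ContinuousLinearMap.id ℝ E‖ ≤ ‖c‖ * ‖ContinuousLinearMap.id ℝ E‖ :=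
                  ContinuousLinearMap.opNorm_smul_le _ _
              _ ≤ 1 * 1 := by
                  apply mul_le_mul ?_ ContinuousLinearMap.norm_id_le (norm_nonneg _) one_pos.le
                  rw [Real.norm_eq_abs, abs_of_nonneg hc0]; exact hc1
              _ = 1 := one_mul 1
        _ = 2 := mul_one 2
    have h2 := Convex.norm_image_sub_le_of_norm_hasFDerivWithin_le
      (f := fun w => η (c • w)) (f' := f') (s := univ) (C := 2)
      (fun z _ => (hf z).hasFDerivWithinAt) (fun z _ => hb z) convex_univ
      (mem_univ y) (mem_univ x)
    rw [Real.norm_eq_abs] at h2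
    simpa using h2
  · have h1 := h01 (c • x)
    have h2 := h01 (c • y)
    rw [abs_sub_le_iff]
    constructor <;> linarith

theorem truncation_modular_estimate
    (n : ℕ)
    (G g : ℝ → ℝ) (pm pp : ℝ)
    (hEven : ∀ t, G (-t) = G t)
    (hConv : ConvexOn ℝ univ G)
    (hMono : StrictMonoOn G (Ioi 0))
    (hG0 : G 0 = 0)
    (hderiv : ∀ t > 0, HasDerivAt G (g t) t)
    (hp : 1 < pm) (hpm : pm ≤ pp)
    (hgrowth : ∀ t > 0, pm ≤ t * g t / G t ∧ t * g t / G t ≤ pp)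
    (M N : ℝ → ℝ)
    (hMmono : MonotoneOn M (Ioi 0)) (hNmono : MonotoneOn N (Ioi 0))
    (hMpos : ∀ r > 0, 0 < M r) (hNpos : ∀ r > 0, 0 < N r)
    (hMlow : ∀ r > 0, min 1 r ≤ M r) (hNcont : ContinuousOn N (Ioi 0))
    (hint0 : IntegrableOn
      (fun r : ℝ => r ^ ((n : ℝ) - 1 + pm) / (N r * M r ^ pm)) (Ioo 0 1))
    (hint1 : IntegrableOn
      (fun r : ℝ => r ^ ((n : ℝ) - 1) / (N r * M r ^ pm)) (Ioi 1))
    (η : EuclideanSpace ℝ (Fin n) → ℝ)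
    (hηsmooth : ContDiff ℝ (⊤ : ℕ∞) η)
    (hη01 : ∀ x, 0 ≤ η x ∧ η x ≤ 1)
    (hηone : ∀ x ∈ Metric.ball (0 : EuclideanSpace ℝ (Fin n)) 1, η x = 1)
    (hηsupp : tsupport η = Metric.closedBall (0 : EuclideanSpace ℝ (Fin n)) 2)
    (hηgrad : ∀ x, ‖fderiv ℝ η x‖ ≤ 2) :
    ∃ C > 0, ∀ u : EuclideanSpace ℝ (Fin n) → ℝ, Measurable u →
      (∫⁻ x, ENNReal.ofReal (G |u x|) < ⊤) →
      (∫⁻ p : EuclideanSpace ℝ (Fin n) × EuclideanSpace ℝ (Fin n),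
          ENNReal.ofReal (G (|u p.1 - u p.2| / M ‖p.1 - p.2‖)) /
            ENNReal.ofReal (N ‖p.1 - p.2‖) < ⊤) →
      ∀ k : ℕ, 1 ≤ k →
        (∫⁻ p : EuclideanSpace ℝ (Fin n) × EuclideanSpace ℝ (Fin n),
            ENNReal.ofReal (G (|η ((k : ℝ)⁻¹ • p.1) * u p.1 -
              η ((k : ℝ)⁻¹ • p.2) * u p.2| / M ‖p.1 - p.2‖)) /
              ENNReal.ofReal (N ‖p.1 - p.2‖)) ≤
        ENNReal.ofReal C *
          ((∫⁻ p : EuclideanSpace ℝ (Fin n) × EuclideanSpace ℝ (Fin n),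
              ENNReal.ofReal (G (|u p.1 - u p.2| / M ‖p.1 - p.2‖)) /
                ENNReal.ofReal (N ‖p.1 - p.2‖)) +
            ∫⁻ x, ENNReal.ofReal (G |u x|)) := by
  classical
  rcases Nat.eq_zero_or_pos n with hn0 | hn
  · subst hn0
    refine ⟨1, one_pos, fun u hu hGfin hWfin k hk => ?_⟩
    have hsub : ∀ p : EuclideanSpace ℝ (Fin 0) × EuclideanSpace ℝ (Fin 0), p.1 = p.2 := by
      intro p
      ext i
      exact Fin.elim0 i
    have h0 : (∫⁻ p : EuclideanSpace ℝ (Fin 0) × EuclideanSpace ℝ (Fin 0),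
        ENNReal.ofReal (G (|η ((k : ℝ)⁻¹ • p.1) * u p.1 -
          η ((k : ℝ)⁻¹ • p.2) * u p.2| / M ‖p.1 - p.2‖)) /
          ENNReal.ofReal (N ‖p.1 - p.2‖)) = 0 := by
      rw [show (fun p : EuclideanSpace ℝ (Fin 0) × EuclideanSpace ℝ (Fin 0) =>
        ENNReal.ofReal (G (|η ((k : ℝ)⁻¹ • p.1) * u p.1 -
          η ((k : ℝ)⁻¹ • p.2) * u p.2| / M ‖p.1 - p.2‖)) /
          ENNReal.ofReal (N ‖p.1 - p.2‖)) = fun _ => 0 from ?_, lintegral_zero]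
      funext p
      rw [← hsub p, sub_self, abs_zero, zero_div, hG0, ENNReal.ofReal_zero,
        ENNReal.zero_div]
    rw [h0]
    exact bot_le
  · -- main case : n ≥ 1
    have hn' : (1:ℕ) ≤ n := hn
    haveI : NeZero n := ⟨hn.ne'⟩
    haveI : Nontrivial (EuclideanSpace ℝ (Fin n)) := by
      refine nontrivial_of_ne (EuclideanSpace.single ⟨0, hn⟩ (1:ℝ)) 0 ?_
      intro h
      have := congrArg (fun v => v ⟨0, hn⟩) h
      simp [EuclideanSpace.single] at this
    have hpm0 : (0:ℝ) < pm := lt_trans one_pos hp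
    have hpp0 : (0:ℝ) < pp := lt_of_lt_of_le hpm0 hpm
    have Gnn := G_nonneg hEven hConv hG0
    have Gmono := G_mono hEven hConv hG0
    have Gsu := G_scale_up hEven hConv hG0 hderiv hp hgrowth hpp0
    have Gsd := G_scale_down hEven hConv hG0 hderiv hp hgrowth hpm0
    have hGcont : Continuous G := by
      rw [← continuousOn_univ]
      exact ConvexOn.continuousOn isOpen_univ hConv
    obtain ⟨M', hM'mono, hM'eq⟩ := monotone_ext M hMmono hMpos
    obtain ⟨N', hN'mono, hN'eq⟩ := monotone_ext N hNmono hNpos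
    -- the weight function
    set φ : ℝ → ℝ≥0∞ := fun r =>
      ENNReal.ofReal ((min r 1 / M' r) ^ pm) / ENNReal.ofReal (N' r) with hφdef
    have hrpowcont : Continuous fun t : ℝ => t ^ pm :=
      Continuous.rpow_const continuous_id (fun _ => Or.inr hpm0.le)
    have hφmeas : Measurable φ := by
      apply Measurable.div
      · exact (hrpowcont.measurable.comp
          ((measurable_id.min measurable_const).div hM'mono.measurable)).ennreal_ofReal
      · exact hN'mono.measurable.ennreal_ofReal
    -- total mass of the weight
    set A : ℝ≥0∞ := ∫⁻ z : EuclideanSpace ℝ (Fin n), φ ‖z‖ with hAdef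
    have hAfin : A < ⊤ := by
      rw [hAdef, my_lintegral_fun_norm_addHaar (volume : Measure (EuclideanSpace ℝ (Fin n)))
        φ hφmeas]
      apply ENNReal.mul_lt_top (measure_lt_top _ _)
      have hfr : Module.finrank ℝ (EuclideanSpace ℝ (Fin n)) = n := finrank_euclideanSpace_fin
      rw [hfr]
      rw [show Ioi (0:ℝ) = Ioo 0 1 ∪ Ici 1 from (Ioo_union_Ici_eq_Ioi one_pos).symm,
        lintegral_union measurableSet_Ici
          (by rw [Set.disjoint_left]; exact fun x hx hx' => absurd hx.2 (not_lt.2 hx'))]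
      apply ENNReal.add_lt_top.2
      constructor
      · have e1 : ∫⁻ y in Ioo (0:ℝ) 1, ENNReal.ofReal (y ^ (n - 1)) * φ y =
            ∫⁻ y in Ioo (0:ℝ) 1,
              ENNReal.ofReal (y ^ ((n : ℝ) - 1 + pm) / (N y * M y ^ pm)) := by
          apply setLIntegral_congr_fun_ae measurableSet_Ioo
          apply ae_of_all
          intro y hy
          have hy1 : (0:ℝ) < y := hy.1
          have hy2 : y < 1 := hy.2
          have hMy := hMpos y hy1
          have hNy := hNpos y hy1
          rw [hφdef]
          simp only
          rw [hM'eq y hy1, hN'eq y hy1, min_eq_left hy2.le]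
          have hreal : y ^ ((n:ℝ) - 1 + pm) / (N y * M y ^ pm) =
              (y ^ (n - 1) * (y / M y) ^ pm) / N y := by
            have h1 : (y:ℝ) ^ (n - 1) = y ^ ((n:ℝ) - 1) := by
              rw [← Real.rpow_natCast y (n - 1), Nat.cast_sub hn', Nat.cast_one]
            have h2 : y ^ ((n:ℝ) - 1) * y ^ pm = y ^ ((n:ℝ) - 1 + pm) :=
              (Real.rpow_add hy1 _ _).symm
            rw [h1, Real.div_rpow hy1.le hMy.le, ← h2]
            field_simp
          rw [hreal, ENNReal.ofReal_div_of_pos hNy, ENNReal.ofReal_mul (by positivity),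
            ← mul_div_assoc]
        rw [e1]
        exact hint0.lintegral_lt_top
      · have e2 : ∫⁻ y in Ici (1:ℝ), ENNReal.ofReal (y ^ (n - 1)) * φ y =
            ∫⁻ y in Ioi (1:ℝ), ENNReal.ofReal (y ^ (n - 1)) * φ y := by
          rw [← Measure.restrict_congr_set Ioi_ae_eq_Ici]
        rw [e2]
        have e3 : ∫⁻ y in Ioi (1:ℝ), ENNReal.ofReal (y ^ (n - 1)) * φ y =
            ∫⁻ y in Ioi (1:ℝ),
              ENNReal.ofReal (y ^ ((n : ℝ) - 1) / (N y * M y ^ pm)) := by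
          apply setLIntegral_congr_fun_ae measurableSet_Ioi
          apply ae_of_all
          intro y hy
          have hy1 : (0:ℝ) < y := lt_trans one_pos hy
          have hMy := hMpos y hy1
          have hNy := hNpos y hy1
          rw [hφdef]
          simp only
          rw [hM'eq y hy1, hN'eq y hy1, min_eq_right (le_of_lt hy)]
          have hreal : y ^ ((n:ℝ) - 1) / (N y * M y ^ pm) =
              (y ^ (n - 1) * (1 / M y) ^ pm) / N y := by
            have h1 : (y:ℝ) ^ (n - 1) = y ^ ((n:ℝ) - 1) := by
              rw [← Real.rpow_natCast y (n - 1), Nat.cast_sub hn', Nat.cast_one]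
            rw [h1, Real.div_rpow zero_le_one hMy.le, Real.one_rpow]
            field_simp
          rw [hreal, ENNReal.ofReal_div_of_pos hNy, ENNReal.ofReal_mul (by positivity),
            ← mul_div_assoc]
        rw [e3]
        exact hint1.lintegral_lt_top
    -- the constant
    refine ⟨2 ^ pp + 4 ^ pp * A.toReal, by positivity, fun u hu hGfin hWfin k hk => ?_⟩
    set c : ℝ := (k : ℝ)⁻¹ with hcdef
    have hk1 : (1:ℝ) ≤ (k:ℝ) := by exact_mod_cast hk
    have hc0 : 0 ≤ c := by positivity
    have hc1 : c ≤ 1 := by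
      rw [hcdef]
      exact inv_le_one_of_one_le₀ hk1
    have hηdiff : Differentiable ℝ η := hηsmooth.differentiable (by simp)
    -- the two dominating functions
    set f1 : EuclideanSpace ℝ (Fin n) × EuclideanSpace ℝ (Fin n) → ℝ≥0∞ := fun p =>
      ENNReal.ofReal (2 ^ pp) *
        (ENNReal.ofReal (G (|u p.1 - u p.2| / M ‖p.1 - p.2‖)) /
          ENNReal.ofReal (N ‖p.1 - p.2‖)) with hf1def
    set f2 : EuclideanSpace ℝ (Fin n) × EuclideanSpace ℝ (Fin n) → ℝ≥0∞ := fun p =>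
      ENNReal.ofReal (4 ^ pp) * (φ ‖p.1 - p.2‖ * ENNReal.ofReal (G |u p.2|)) with hf2def
    have hgmeas : Measurable (fun p : EuclideanSpace ℝ (Fin n) × EuclideanSpace ℝ (Fin n) =>
        φ ‖p.1 - p.2‖ * ENNReal.ofReal (G |u p.2|)) :=
      (hφmeas.comp ((measurable_fst.sub measurable_snd).norm)).mul
        ((hGcont.measurable.comp ((hu.comp measurable_snd).abs)).ennreal_ofReal)
    have hf2meas : Measurable f2 := measurable_const.mul hgmeas
    -- pointwise estimate
    have key : ∀ p : EuclideanSpace ℝ (Fin n) × EuclideanSpace ℝ (Fin n),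
        ENNReal.ofReal (G (|η (c • p.1) * u p.1 - η (c • p.2) * u p.2| / M ‖p.1 - p.2‖)) /
          ENNReal.ofReal (N ‖p.1 - p.2‖) ≤ f1 p + f2 p := by
      rintro ⟨x, y⟩
      by_cases hxy : x = y
      · subst hxy
        simp only
        rw [sub_self (η (c • x) * u x), abs_zero, zero_div, hG0, ENNReal.ofReal_zero,
          ENNReal.zero_div]
        exact bot_le
      · simp only
        set r : ℝ := ‖x - y‖ with hrdef
        have hr : 0 < r := by
          rw [hrdef]
          exact norm_sub_pos_iff.2 hxy
        have hMr := hMpos r hr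
        have hNr := hNpos r hr
        have habs : |η (c • x) * u x - η (c • y) * u y| ≤
            |u x - u y| + min (2 * r) 1 * |u y| := by
          have e : η (c • x) * u x - η (c • y) * u y =
              η (c • x) * (u x - u y) + (η (c • x) - η (c • y)) * u y := by ring
          rw [e]
          refine (abs_add_le _ _).trans (add_le_add ?_ ?_)
          · rw [abs_mul]
            calc |η (c • x)| * |u x - u y| ≤ 1 * |u x - u y| := by
                  apply mul_le_mul_of_nonneg_right _ (abs_nonneg _)
                  rw [abs_of_nonneg (hη01 _).1]
                  exact (hη01 _).2
              _ = |u x - u y| := one_mul _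
          · rw [abs_mul]
            exact mul_le_mul_of_nonneg_right
              (eta_lip η hηdiff hηgrad hη01 c hc0 hc1 x y) (abs_nonneg _)
        have hmin0 : (0:ℝ) ≤ min (2 * r) 1 := le_min (by positivity) zero_le_one
        have hb0 : (0:ℝ) ≤ min (2 * r) 1 * |u y| / M r := by
          apply div_nonneg (mul_nonneg hmin0 (abs_nonneg _)) hMr.le
        have ha0 : (0:ℝ) ≤ |u x - u y| / M r := by positivity
        have h1 : G (|η (c • x) * u x - η (c • y) * u y| / M r) ≤
            G (|u x - u y| / M r + min (2 * r) 1 * |u y| / M r) := by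
          apply Gmono _ _ (by positivity)
          rw [← add_div]
          gcongr
        have h2 : G (|u x - u y| / M r + min (2 * r) 1 * |u y| / M r) ≤
            (1/2) * G (2 * (|u x - u y| / M r)) +
            (1/2) * G (2 * (min (2 * r) 1 * |u y| / M r)) := by
          have hcv := hConv.2 (mem_univ (2 * (|u x - u y| / M r)))
            (mem_univ (2 * (min (2 * r) 1 * |u y| / M r)))
            (by norm_num : (0:ℝ) ≤ 1/2) (by norm_num : (0:ℝ) ≤ 1/2) (by norm_num)
          simp only [smul_eq_mul] at hcv
          have e : (1/2 : ℝ) * (2 * (|u x - u y| / M r)) +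
              (1/2) * (2 * (min (2 * r) 1 * |u y| / M r)) =
              |u x - u y| / M r + min (2 * r) 1 * |u y| / M r := by ring
          rw [e] at hcv
          exact hcv
        have h3 : G (2 * (|u x - u y| / M r)) ≤ 2 ^ pp * G (|u x - u y| / M r) :=
          Gsu 2 _ one_le_two ha0
        have h4 : G (2 * (min (2 * r) 1 * |u y| / M r)) ≤
            (min r 1 / M r) ^ pm * (4 ^ pp * G |u y|) := by
          rcases le_or_gt r 1 with hr1 | hr1
          · have hMge : r ≤ M r := by
              have := hMlow r hr
              rwa [min_eq_right hr1] at this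
            have hsle : r / M r ≤ 1 := (div_le_one hMr).2 hMge
            have e1 : 2 * (min (2 * r) 1 * |u y| / M r) ≤ (r / M r) * (4 * |u y|) := by
              have e2 : (r / M r) * (4 * |u y|) = 2 * ((2 * r) * |u y| / M r) := by
                field_simp
                ring
              rw [e2]
              gcongr
              exact min_le_left _ _
            calc G (2 * (min (2 * r) 1 * |u y| / M r)) ≤ G ((r / M r) * (4 * |u y|)) :=
                  Gmono _ _ (by positivity) e1
              _ ≤ (r / M r) ^ pm * G (4 * |u y|) :=
                  Gsd _ _ (by positivity) hsle (by positivity)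
              _ ≤ (r / M r) ^ pm * (4 ^ pp * G |u y|) := by
                  apply mul_le_mul_of_nonneg_left
                    (Gsu 4 _ (by norm_num) (abs_nonneg _)) (by positivity)
              _ = (min r 1 / M r) ^ pm * (4 ^ pp * G |u y|) := by
                  rw [min_eq_left hr1]
          · have hMge : 1 ≤ M r := by
              have := hMlow r hr
              rwa [min_eq_left hr1.le] at this
            have hsle : 1 / M r ≤ 1 := by
              rw [div_le_one hMr]; exact hMge
            have hmin : min (2 * r) 1 = 1 := min_eq_right (by linarith)
            have e1 : 2 * (min (2 * r) 1 * |u y| / M r) = (1 / M r) * (2 * |u y|) := by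
              rw [hmin]
              field_simp
            calc G (2 * (min (2 * r) 1 * |u y| / M r)) = G ((1 / M r) * (2 * |u y|)) := by
                  rw [e1]
              _ ≤ (1 / M r) ^ pm * G (2 * |u y|) :=
                  Gsd _ _ (by positivity) hsle (by positivity)
              _ ≤ (1 / M r) ^ pm * (2 ^ pp * G |u y|) := by
                  apply mul_le_mul_of_nonneg_left
                    (Gsu 2 _ one_le_two (abs_nonneg _)) (by positivity)
              _ ≤ (1 / M r) ^ pm * (4 ^ pp * G |u y|) := by
                  apply mul_le_mul_of_nonneg_left _ (by positivity)
                  apply mul_le_mul_of_nonneg_right _ (Gnn _)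
                  exact Real.rpow_le_rpow (by norm_num) (by norm_num) hpp0.le
              _ = (min r 1 / M r) ^ pm * (4 ^ pp * G |u y|) := by
                  rw [min_eq_right hr1.le]
        have Greal : G (|η (c • x) * u x - η (c • y) * u y| / M r) ≤
            2 ^ pp * G (|u x - u y| / M r) +
            4 ^ pp * ((min r 1 / M r) ^ pm * G |u y|) := by
          have e : (min r 1 / M r) ^ pm * (4 ^ pp * G |u y|) =
              4 ^ pp * ((min r 1 / M r) ^ pm * G |u y|) := by ring
          have n1 : 0 ≤ 2 ^ pp * G (|u x - u y| / M r) :=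
            mul_nonneg (by positivity) (Gnn _)
          have n2 : 0 ≤ (min r 1 / M r) ^ pm * (4 ^ pp * G |u y|) := by
            apply mul_nonneg _ (mul_nonneg (by positivity) (Gnn _))
            positivity
          linarith [h1, h2, h3, h4, e]
        have hW0 : (0:ℝ) ≤ (min r 1 / M r) ^ pm := by positivity
        calc ENNReal.ofReal (G (|η (c • x) * u x - η (c • y) * u y| / M r)) /
              ENNReal.ofReal (N r)
            ≤ ENNReal.ofReal (2 ^ pp * G (|u x - u y| / M r) +
                4 ^ pp * ((min r 1 / M r) ^ pm * G |u y|)) / ENNReal.ofReal (N r) :=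
              ENNReal.div_le_div_right (ENNReal.ofReal_le_ofReal Greal) _
          _ = f1 (x, y) + f2 (x, y) := by
              rw [hf1def, hf2def]
              simp only
              rw [hφdef]
              simp only
              rw [hM'eq r hr, hN'eq r hr]
              rw [ENNReal.ofReal_add (mul_nonneg (by positivity) (Gnn _))
                  (mul_nonneg (by positivity) (mul_nonneg hW0 (Gnn _))),
                ENNReal.add_div,
                ENNReal.ofReal_mul (by positivity : (0:ℝ) ≤ 2 ^ pp),
                ENNReal.ofReal_mul (by positivity : (0:ℝ) ≤ 4 ^ pp),
                ENNReal.ofReal_mul hW0]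
              simp only [div_eq_mul_inv]
              ring
    -- integrate the pointwise estimate
    have step1 : (∫⁻ p : EuclideanSpace ℝ (Fin n) × EuclideanSpace ℝ (Fin n),
        ENNReal.ofReal (G (|η (c • p.1) * u p.1 - η (c • p.2) * u p.2| / M ‖p.1 - p.2‖)) /
          ENNReal.ofReal (N ‖p.1 - p.2‖)) ≤ ∫⁻ p, (f1 p + f2 p) :=
      lintegral_mono key
    have step2 : ∫⁻ p, (f1 p + f2 p) = (∫⁻ p, f1 p) + ∫⁻ p, f2 p :=
      lintegral_add_right _ hf2meas
    have step3 : ∫⁻ p, f1 p = ENNReal.ofReal (2 ^ pp) *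
        ∫⁻ p : EuclideanSpace ℝ (Fin n) × EuclideanSpace ℝ (Fin n),
          ENNReal.ofReal (G (|u p.1 - u p.2| / M ‖p.1 - p.2‖)) /
            ENNReal.ofReal (N ‖p.1 - p.2‖) := by
      rw [hf1def]
      exact lintegral_const_mul' _ _ ENNReal.ofReal_ne_top
    have step4 : ∫⁻ p, f2 p = ENNReal.ofReal (4 ^ pp) *
        (A * ∫⁻ x, ENNReal.ofReal (G |u x|)) := by
      rw [hf2def]
      rw [lintegral_const_mul' _ _ ENNReal.ofReal_ne_top]
      congr 1
      have inner : ∀ y : EuclideanSpace ℝ (Fin n),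
          (∫⁻ x : EuclideanSpace ℝ (Fin n), φ ‖x - y‖ * ENNReal.ofReal (G |u y|)) =
            A * ENNReal.ofReal (G |u y|) := by
        intro y
        rw [lintegral_mul_const _
            (show Measurable fun x : EuclideanSpace ℝ (Fin n) => φ ‖x - y‖ from
              hφmeas.comp ((measurable_id.sub measurable_const).norm)),
          lintegral_sub_right_eq_self (fun z => φ ‖z‖) y, ← hAdef]
      have T : (∫⁻ p : EuclideanSpace ℝ (Fin n) × EuclideanSpace ℝ (Fin n),
          φ ‖p.1 - p.2‖ * ENNReal.ofReal (G |u p.2|)) =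
          ∫⁻ y, A * ENNReal.ofReal (G |u y|) := by
        rw [Measure.volume_eq_prod, lintegral_prod_symm _ hgmeas.aemeasurable]
        exact lintegral_congr inner
      rw [T, lintegral_const_mul' A _ hAfin.ne]
    calc (∫⁻ p : EuclideanSpace ℝ (Fin n) × EuclideanSpace ℝ (Fin n),
        ENNReal.ofReal (G (|η (c • p.1) * u p.1 - η (c • p.2) * u p.2| / M ‖p.1 - p.2‖)) /
          ENNReal.ofReal (N ‖p.1 - p.2‖))
        ≤ (∫⁻ p, f1 p) + ∫⁻ p, f2 p := step1.trans (le_of_eq step2)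
      _ = ENNReal.ofReal (2 ^ pp) *
            (∫⁻ p : EuclideanSpace ℝ (Fin n) × EuclideanSpace ℝ (Fin n),
              ENNReal.ofReal (G (|u p.1 - u p.2| / M ‖p.1 - p.2‖)) /
                ENNReal.ofReal (N ‖p.1 - p.2‖)) +
          ENNReal.ofReal (4 ^ pp) * (A * ∫⁻ x, ENNReal.ofReal (G |u x|)) := by
          rw [step3, step4]
      _ ≤ ENNReal.ofReal (2 ^ pp + 4 ^ pp * A.toReal) *
            (∫⁻ p : EuclideanSpace ℝ (Fin n) × EuclideanSpace ℝ (Fin n),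
              ENNReal.ofReal (G (|u p.1 - u p.2| / M ‖p.1 - p.2‖)) /
                ENNReal.ofReal (N ‖p.1 - p.2‖)) +
          ENNReal.ofReal (2 ^ pp + 4 ^ pp * A.toReal) * ∫⁻ x, ENNReal.ofReal (G |u x|) := by
          apply add_le_add
          · apply mul_le_mul_left
            apply ENNReal.ofReal_le_ofReal
            nlinarith [Real.rpow_nonneg (by norm_num : (0:ℝ) ≤ 4) pp, ENNReal.toReal_nonneg (a := A)]
          · rw [← mul_assoc]
            apply mul_le_mul_left
            have hA' : A = ENNReal.ofReal A.toReal := (ENNReal.ofReal_toReal hAfin.ne).symm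
            conv_lhs => rw [hA']
            rw [← ENNReal.ofReal_mul (by positivity)]
            apply ENNReal.ofReal_le_ofReal
            nlinarith [Real.rpow_pos_of_pos (by norm_num : (0:ℝ) < 2) pp]
      _ = ENNReal.ofReal (2 ^ pp + 4 ^ pp * A.toReal) *
          ((∫⁻ p : EuclideanSpace ℝ (Fin n) × EuclideanSpace ℝ (Fin n),
              ENNReal.ofReal (G (|u p.1 - u p.2| / M ‖p.1 - p.2‖)) /
                ENNReal.ofReal (N ‖p.1 - p.2‖)) +
            ∫⁻ x, ENNReal.ofReal (G |u x|)) := (mul_add _ _ _).symm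
end
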